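/- Let (X,d,μ) be a metric measure space where μ is a Borel measure that is positive on nonempty open sets and finite on bounded sets. Let 1 ≤ p < q < ∞, set α = q/p, and let C_e > 0. Suppose that for every μ-measurable function u : X → ℝ and every nonnegative μ-measurable function g : X → ℝ with |u(x) − u(y)| ≤ d(x,y)(g(x) + g(y)) for μ-almost every x and y, one has (∫_X |u|^q dμ)^{1/q} ≤ C_e [(∫_X |u|^p dμ)^{1/p} + (∫_X g^p dμ)^{1/p}]. Then for every x ∈ X and every r ∈ (0,1], μ(B(x,r)) ≥ C r^{pα/(α−1)}, where the constant C is given explicitly by 1/C = 2^{pα²/(α−1)² + 3pα/(α−1)} · C_e^{pα/(α−1)}. -/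

import Mathlib

/-!
Testing the embedding on the cutoff `min (t - s) (t - d(·, x))⁺`, which equals `t - s` on
`B(x, s)`, vanishes off `B(x, t)` and has the Hajłasz gradient `1_{B(x, t)}`, gives
`μ(B(x, s)) ≤ (2 C_e / (t - s))^q μ(B(x, t))^α` for `0 < s < t ≤ 1`. With `n = q / (α - 1)`,
shrinking a radius `T` by `2^{1/(α-1)} · 2 C_e · μ(B(x, T))^{1/n}` divides the measure of the ball
by at least `2^n`. If `μ(B(x, r))` were below the claimed bound, these decrements would form a
geometric series of sum `< r / 2`, so the measures of balls of radius `> r / 2` would tend to `0`,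
contradicting `μ(B(x, r / 2)) > 0`.
-/

open MeasureTheory Metric Set
open scoped ENNReal

section Cutoff

variable {X : Type*} [PseudoMetricSpace X] {x y : X} {s t : ℝ}

def ballCutoff (x : X) (s t : ℝ) (y : X) : ℝ := min (t - s) (max (t - dist y x) 0)

lemma lipschitzWith_ballCutoff (x : X) (s t : ℝ) : LipschitzWith 1 (ballCutoff x s t) := by
  have h := (((IsometryEquiv.subLeft t).isometry.lipschitz.comp
    (LipschitzWith.dist_left x)).max_const 0).const_min (t - s)
  rwa [mul_one] at h

lemma ballCutoff_of_mem_ball (hy : y ∈ ball x s) : ballCutoff x s t y = t - s :=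
  min_eq_left <| le_max_of_le_left <| by linarith [mem_ball.mp hy]

lemma ballCutoff_of_notMem_ball (hst : s ≤ t) (hy : y ∉ ball x t) : ballCutoff x s t y = 0 := by
  have : t - dist y x ≤ 0 := by linarith [not_lt.mp (mt mem_ball.mpr hy)]
  rw [ballCutoff, max_eq_right this, min_eq_right (by linarith)]

lemma ballCutoff_nonneg (hst : s ≤ t) (y : X) : 0 ≤ ballCutoff x s t y :=
  le_min (by linarith) (le_max_right _ _)

lemma ballCutoff_le (y : X) : ballCutoff x s t y ≤ t - s := min_le_left _ _

lemma abs_ballCutoff_sub_le (hst : s ≤ t) (y z : X) :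
    |ballCutoff x s t y - ballCutoff x s t z| ≤
      dist y z * ((ball x t).indicator 1 y + (ball x t).indicator 1 z) := by
  by_cases h : y ∈ ball x t ∨ z ∈ ball x t
  · have hsum : (1 : ℝ) ≤ (ball x t).indicator 1 y + (ball x t).indicator 1 z := by
      rcases h with h | h <;> simp [indicator_of_mem h, indicator_nonneg]
    calc |ballCutoff x s t y - ballCutoff x s t z|
        ≤ dist y z := by
          simpa [Real.dist_eq] using (lipschitzWith_ballCutoff x s t).dist_le_mul y z
      _ ≤ _ := le_mul_of_one_le_right dist_nonneg hsum
  · rw [not_or] at h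
    rw [ballCutoff_of_notMem_ball hst h.1, ballCutoff_of_notMem_ball hst h.2, sub_zero, abs_zero]
    simp [indicator_of_notMem h.1, indicator_of_notMem h.2]

end Cutoff

lemma lintegral_ofReal_indicator_one_rpow {X : Type*} [MeasurableSpace X] (μ : Measure X)
    {S : Set X} (hS : MeasurableSet S) {p : ℝ} (hp : 0 < p) :
    ∫⁻ y, ENNReal.ofReal (S.indicator 1 y) ^ p ∂μ = μ S := by
  rw [← lintegral_indicator_one hS]
  congr 1 with y
  by_cases hy : y ∈ S <;> simp [hy, hp]

section BallCutoffIntegrals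

variable {X : Type*} [MetricSpace X] [MeasurableSpace X] [OpensMeasurableSpace X]
  (μ : Measure X) {x : X} {s t : ℝ}

lemma ofReal_rpow_mul_measure_ball_le_lintegral_ballCutoff (hst : s ≤ t) (q : ℝ) :
    ENNReal.ofReal (t - s) ^ q * μ (ball x s) ≤
      ∫⁻ y, ENNReal.ofReal |ballCutoff x s t y| ^ q ∂μ := by
  rw [← setLIntegral_const, ← lintegral_indicator measurableSet_ball]
  refine lintegral_mono fun y => ?_
  by_cases hy : y ∈ ball x s
  · rw [indicator_of_mem hy, ballCutoff_of_mem_ball hy, abs_of_nonneg (sub_nonneg.mpr hst)]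
  · rw [indicator_of_notMem hy]
    exact zero_le

lemma lintegral_ballCutoff_rpow_le (hst : s ≤ t) {p : ℝ} (hp : 0 < p) :
    ∫⁻ y, ENNReal.ofReal |ballCutoff x s t y| ^ p ∂μ ≤
      ENNReal.ofReal (t - s) ^ p * μ (ball x t) := by
  rw [← setLIntegral_const, ← lintegral_indicator measurableSet_ball]
  refine lintegral_mono fun y => ?_
  by_cases hy : y ∈ ball x t
  · rw [indicator_of_mem hy, abs_of_nonneg (ballCutoff_nonneg hst y)]
    gcongr
    exact ballCutoff_le y
  · simp [ballCutoff_of_notMem_ball hst hy, hp]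

end BallCutoffIntegrals

def HasHajlaszSobolevEmbedding {X : Type*} [MetricSpace X] [MeasurableSpace X] (μ : Measure X)
    (p q Ce : ℝ) : Prop :=
  ∀ u g : X → ℝ, AEMeasurable u μ → AEMeasurable g μ → (∀ y, 0 ≤ g y) →
    (∀ᵐ y ∂μ, ∀ᵐ z ∂μ, |u y - u z| ≤ dist y z * (g y + g z)) →
    (∫⁻ y, ENNReal.ofReal |u y| ^ q ∂μ) ^ (1 / q) ≤
      ENNReal.ofReal Ce *
        ((∫⁻ y, ENNReal.ofReal |u y| ^ p ∂μ) ^ (1 / p) +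
          (∫⁻ y, ENNReal.ofReal (g y) ^ p ∂μ) ^ (1 / p))

namespace HasHajlaszSobolevEmbedding

variable {X : Type*} [MetricSpace X] [MeasurableSpace X] [OpensMeasurableSpace X]
  {μ : Measure X} {p q Ce : ℝ} {s t : ℝ}

lemma ofReal_sub_mul_measure_ball_rpow_le (h : HasHajlaszSobolevEmbedding μ p q Ce)
    (hp : 0 < p) (hq : 0 < q) (hst : s ≤ t) (hts : t - s ≤ 1) (x : X) :
    ENNReal.ofReal (t - s) * μ (ball x s) ^ (1 / q) ≤
      2 * ENNReal.ofReal Ce * μ (ball x t) ^ (1 / p) := by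
  have rpow_mul_rpow_inv {r : ℝ} (hr : 0 < r) (a b : ℝ≥0∞) :
      (a ^ r * b) ^ (1 / r) = a * b ^ (1 / r) := by
    rw [ENNReal.mul_rpow_of_nonneg _ _ (by positivity), ← ENNReal.rpow_mul,
      mul_one_div_cancel hr.ne', ENNReal.rpow_one]
  have hembed := h (ballCutoff x s t) ((ball x t).indicator 1)
    (lipschitzWith_ballCutoff x s t).continuous.aemeasurable
    ((measurable_const.indicator measurableSet_ball).aemeasurable)
    (indicator_nonneg fun _ _ => zero_le_one)
    (.of_forall fun y => .of_forall fun z => abs_ballCutoff_sub_le hst y z)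
  calc ENNReal.ofReal (t - s) * μ (ball x s) ^ (1 / q)
      = (ENNReal.ofReal (t - s) ^ q * μ (ball x s)) ^ (1 / q) := (rpow_mul_rpow_inv hq _ _).symm
    _ ≤ (∫⁻ y, ENNReal.ofReal |ballCutoff x s t y| ^ q ∂μ) ^ (1 / q) := by
      gcongr
      exact ofReal_rpow_mul_measure_ball_le_lintegral_ballCutoff μ hst q
    _ ≤ ENNReal.ofReal Ce * ((ENNReal.ofReal (t - s) ^ p * μ (ball x t)) ^ (1 / p) +
          μ (ball x t) ^ (1 / p)) := by
      refine hembed.trans ?_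
      rw [lintegral_ofReal_indicator_one_rpow μ measurableSet_ball hp]
      gcongr
      exact lintegral_ballCutoff_rpow_le μ hst hp
    _ ≤ ENNReal.ofReal Ce * (1 * μ (ball x t) ^ (1 / p) + μ (ball x t) ^ (1 / p)) := by
      rw [rpow_mul_rpow_inv hp]
      gcongr
      exact ENNReal.ofReal_le_one.mpr hts
    _ = 2 * ENNReal.ofReal Ce * μ (ball x t) ^ (1 / p) := by ring

lemma measureReal_ball_le (h : HasHajlaszSobolevEmbedding μ p q Ce) (hp : 0 < p) (hq : 0 < q)
    (hCe : 0 ≤ Ce) (hst : s < t) (hts : t - s ≤ 1) (x : X) (hfin : μ (ball x t) ≠ ∞) :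
    μ.real (ball x s) ≤ (2 * Ce / (t - s)) ^ q * μ.real (ball x t) ^ (q / p) := by
  have hts₀ : 0 < t - s := sub_pos.mpr hst
  have hreal : (t - s) * μ.real (ball x s) ^ (1 / q) ≤ 2 * Ce * μ.real (ball x t) ^ (1 / p) := by
    have := ENNReal.toReal_mono (by finiteness)
      (h.ofReal_sub_mul_measure_ball_rpow_le hp hq hst.le hts x)
    simpa [measureReal_def, ENNReal.toReal_rpow, hts₀.le, hCe] using this
  calc μ.real (ball x s) = (μ.real (ball x s) ^ (1 / q)) ^ q := by
        rw [← Real.rpow_mul measureReal_nonneg, one_div_mul_cancel hq.ne', Real.rpow_one]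
    _ ≤ (2 * Ce / (t - s) * μ.real (ball x t) ^ (1 / p)) ^ q := by
        gcongr
        rw [div_mul_eq_mul_div, le_div_iff₀ hts₀]
        linarith
    _ = (2 * Ce / (t - s)) ^ q * μ.real (ball x t) ^ (q / p) := by
        rw [Real.mul_rpow (by positivity) (by positivity), ← Real.rpow_mul measureReal_nonneg,
          one_div_mul_eq_div]

end HasHajlaszSobolevEmbedding

lemma rpow_div_mul_rpow_eq_half_rpow_mul {A α q v : ℝ} (hA : 0 < A) (hα : 1 < α) (hq : 0 < q)
    (hv : 0 < v) :
    (A / (2 ^ (α - 1)⁻¹ * A * v ^ (q / (α - 1))⁻¹)) ^ q * v ^ α =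
      (1 / 2) ^ (q / (α - 1)) * v := by
  have hα₀ : α - 1 ≠ 0 := (sub_pos.mpr hα).ne'
  have hbase : A / (2 ^ (α - 1)⁻¹ * A * v ^ (q / (α - 1))⁻¹) =
      (1 / 2) ^ (α - 1)⁻¹ * (v ^ (q / (α - 1))⁻¹)⁻¹ := by
    rw [Real.div_rpow zero_le_one zero_le_two, Real.one_rpow]
    field_simp
  have hexp : (q / (α - 1))⁻¹ * q = α - 1 := by field_simp
  rw [hbase, Real.mul_rpow (by positivity) (by positivity), ← Real.rpow_mul (by norm_num),
    Real.inv_rpow (by positivity), ← Real.rpow_mul hv.le, inv_mul_eq_div, hexp,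
    ← Real.rpow_neg hv.le, mul_assoc, ← Real.rpow_add hv, neg_sub, sub_add_cancel, Real.rpow_one]

section Descent

variable {F : ℝ → ℝ} {A α q : ℝ}

lemma exists_le_half_pow_rpow_mul_of_le_div_sub_rpow_mul_rpow (hA : 0 < A) (hα : 1 < α)
    (hq : 0 < q) (hF_pos : ∀ t, 0 < t → 0 < F t)
    (hF : ∀ s t, 0 < s → s < t → t ≤ 1 → F s ≤ (A / (t - s)) ^ q * F t ^ α)
    {t₀ : ℝ} (ht₀ : 0 < t₀) (ht₀₁ : t₀ ≤ 1)
    (hδ : 4 * (2 ^ (α - 1)⁻¹ * A * F t₀ ^ (q / (α - 1))⁻¹) < t₀) (i : ℕ) :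
    ∃ T, t₀ / 2 < T ∧ F T ≤ ((1 / 2) ^ i) ^ (q / (α - 1)) * F t₀ := by
  set n := q / (α - 1)
  have hn : 0 < n := div_pos hq (sub_pos.mpr hα)
  set c := 2 ^ (α - 1)⁻¹ * A
  set δ := c * F t₀ ^ n⁻¹
  have hF₀ := hF_pos t₀ ht₀
  have hδ₀ : 0 < δ := by positivity
  suffices h : ∃ T, t₀ - 2 * δ * (1 - (1 / 2) ^ i) ≤ T ∧ T ≤ t₀ ∧
      F T ≤ ((1 / 2) ^ i) ^ n * F t₀ by
    obtain ⟨T, hT_ge, -, hFT⟩ := h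
    exact ⟨T, by nlinarith [mul_pos hδ₀ (by positivity : (0 : ℝ) < (1 / 2) ^ i)], hFT⟩
  induction i with
  | zero => exact ⟨t₀, by simp, le_rfl, by simp⟩
  | succ i ih =>
    obtain ⟨T, hT_ge, hT_le, hFT⟩ := ih
    set ε : ℝ := (1 / 2) ^ i
    have hε : 0 < ε := by positivity
    have hT : t₀ / 2 < T := by nlinarith
    have hFT_pos := hF_pos T (by linarith)
    set σ := c * F T ^ n⁻¹
    have hσ_le : σ ≤ ε * δ :=
      calc c * F T ^ n⁻¹ ≤ c * (ε ^ n * F t₀) ^ n⁻¹ := by gcongr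
        _ = ε * δ := by
          rw [Real.mul_rpow (by positivity) hF₀.le, Real.rpow_rpow_inv hε.le hn.ne']; ring
    have hσ : 0 < σ := by positivity
    have hT_sub : t₀ - 2 * δ * (1 - (1 / 2) ^ (i + 1)) ≤ T - σ := by
      rw [pow_succ]; nlinarith
    refine ⟨T - σ, hT_sub, by linarith, ?_⟩
    calc F (T - σ) ≤ (A / (T - (T - σ))) ^ q * F T ^ α :=
          hF _ _ (by nlinarith) (by linarith) (by linarith)
      _ = (1 / 2) ^ n * F T := by
          rw [sub_sub_cancel]; exact rpow_div_mul_rpow_eq_half_rpow_mul hA hα hq hFT_pos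
      _ ≤ (1 / 2) ^ n * (ε ^ n * F t₀) := by gcongr
      _ = ((1 / 2) ^ (i + 1)) ^ n * F t₀ := by
          rw [pow_succ, Real.mul_rpow hε.le (by norm_num)]; ring

theorem rpow_le_of_le_div_sub_rpow_mul_rpow (hA : 0 < A) (hα : 1 < α) (hq : 0 < q)
    (hF_pos : ∀ t, 0 < t → 0 < F t) (hF_mono : MonotoneOn F (Ioi 0))
    (hF : ∀ s t, 0 < s → s < t → t ≤ 1 → F s ≤ (A / (t - s)) ^ q * F t ^ α)
    {t₀ : ℝ} (ht₀ : 0 < t₀) (ht₀₁ : t₀ ≤ 1) :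
    (t₀ / (4 * 2 ^ (α - 1)⁻¹ * A)) ^ (q / (α - 1)) ≤ F t₀ := by
  set n := q / (α - 1)
  have hn : 0 < n := div_pos hq (sub_pos.mpr hα)
  have hF₀ := hF_pos t₀ ht₀
  by_contra! hlt
  have hδ : 4 * (2 ^ (α - 1)⁻¹ * A * F t₀ ^ n⁻¹) < t₀ := by
    have h := Real.rpow_lt_rpow hF₀.le hlt (inv_pos.mpr hn)
    rw [Real.rpow_rpow_inv (by positivity) hn.ne', lt_div_iff₀ (by positivity)] at h
    linarith
  obtain ⟨i, hi⟩ := exists_pow_lt_of_lt_one (div_pos (hF_pos _ (half_pos ht₀)) hF₀)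
    (Real.rpow_lt_one (by norm_num) (by norm_num) hn : (1 / 2 : ℝ) ^ n < 1)
  obtain ⟨T, hT, hFT⟩ :=
    exists_le_half_pow_rpow_mul_of_le_div_sub_rpow_mul_rpow hA hα hq hF_pos hF ht₀ ht₀₁ hδ i
  have h_half : F (t₀ / 2) ≤ F T := hF_mono (half_pos ht₀) (by simp only [mem_Ioi]; linarith) hT.le
  rw [Real.rpow_pow_comm (by norm_num), lt_div_iff₀ hF₀] at hi
  linarith

end Descent

lemma inv_two_rpow_mul_rpow_le {p α C r : ℝ} (hp : 0 < p) (hα : 1 < α) (hC : 0 < C)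
    (hr : 0 ≤ r) :
    (2 ^ (p * α ^ 2 / (α - 1) ^ 2 + 3 * p * α / (α - 1)) * C ^ (p * α / (α - 1)))⁻¹ *
        r ^ (p * α / (α - 1)) ≤
      (r / (4 * 2 ^ (α - 1)⁻¹ * (2 * C))) ^ (p * α / (α - 1)) := by
  have hα₀ : 0 < α - 1 := sub_pos.mpr hα
  have hconst : 4 * 2 ^ (α - 1)⁻¹ * (2 * C) = 2 ^ (3 + (α - 1)⁻¹) * C := by
    rw [Real.rpow_add two_pos]; norm_num; ring
  have hexp : (3 + (α - 1)⁻¹) * (p * α / (α - 1)) ≤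
      p * α ^ 2 / (α - 1) ^ 2 + 3 * p * α / (α - 1) := by
    have : (3 + (α - 1)⁻¹) * (p * α / (α - 1)) =
        p * α ^ 2 / (α - 1) ^ 2 + 3 * p * α / (α - 1) - p * α / (α - 1) := by
      field_simp; ring
    have : 0 < p * α / (α - 1) := by positivity
    linarith
  rw [hconst, Real.div_rpow hr (by positivity), Real.mul_rpow (by positivity) hC.le,
    ← Real.rpow_mul zero_le_two, inv_mul_eq_div]
  gcongr
  exact one_le_two

/-- Quantitative version of the main theorem: under the Hajłasz–Sobolev embedding
with constant `C_e`, for every `x` and `0 < r ≤ 1` one has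
`μ(B(x,r)) ≥ C r^{pα/(α-1)}` with `α = q/p` and
`1/C = 2^{pα²/(α-1)² + 3pα/(α-1)} · C_e^{pα/(α-1)}`. -/
theorem sobolev_embedding_implies_measure_lower_bound_explicit
    {X : Type*} [MetricSpace X] [MeasurableSpace X] [BorelSpace X]
    (μ : Measure X)
    (hopen : ∀ U : Set X, IsOpen U → U.Nonempty → 0 < μ U)
    (hbounded : ∀ s : Set X, Bornology.IsBounded s → μ s < ∞)
    (p q : ℝ) (hp : 1 ≤ p) (hpq : p < q)
    (Ce : ℝ) (hCe : 0 < Ce)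
    (hembed : ∀ u g : X → ℝ, AEMeasurable u μ → AEMeasurable g μ → (∀ y, 0 ≤ g y) →
      (∀ᵐ y ∂μ, ∀ᵐ z ∂μ, |u y - u z| ≤ dist y z * (g y + g z)) →
      (∫⁻ y, ENNReal.ofReal |u y| ^ q ∂μ) ^ (1 / q) ≤
        ENNReal.ofReal Ce *
          ((∫⁻ y, ENNReal.ofReal |u y| ^ p ∂μ) ^ (1 / p) +
            (∫⁻ y, ENNReal.ofReal (g y) ^ p ∂μ) ^ (1 / p))) :
    ∀ x : X, ∀ r : ℝ, 0 < r → r ≤ 1 →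
      letI α : ℝ := q / p
      ENNReal.ofReal
          ((2 ^ (p * α ^ 2 / (α - 1) ^ 2 + 3 * p * α / (α - 1)) *
              Ce ^ (p * α / (α - 1)))⁻¹ *
            r ^ (p * α / (α - 1))) ≤
        μ (ball x r) := by
  intro x r hr hr₁
  set α : ℝ := q / p
  have hp₀ : 0 < p := by linarith
  have hq₀ : 0 < q := by linarith
  have hα : 1 < α := (one_lt_div hp₀).mpr hpq
  have hpα : p * α = q := mul_div_cancel₀ q hp₀.ne'
  have hfin : ∀ t, μ (ball x t) ≠ ∞ := fun t => (hbounded _ isBounded_ball).ne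
  have hball := rpow_le_of_le_div_sub_rpow_mul_rpow (F := fun t => μ.real (ball x t))
    (by positivity : 0 < 2 * Ce) hα hq₀
    (fun t ht => ENNReal.toReal_pos (hopen _ isOpen_ball ⟨x, mem_ball_self ht⟩).ne' (hfin t))
    (fun s _ t _ hst => measureReal_mono (ball_subset_ball hst) (hfin t))
    (fun s t _ hst ht => HasHajlaszSobolevEmbedding.measureReal_ball_le hembed hp₀ hq₀ hCe.le
      hst (by linarith) x (hfin t)) hr hr₁
  rw [← hpα] at hball
  rw [← ENNReal.ofReal_toReal (hfin r)]
  exact ENNReal.ofReal_le_ofReal <| (inv_two_rpow_mul_rpow_le hp₀ hα hCe hr.le).trans hball
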